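/- arXiv:2301.12841 — 2 statements merged into one kernel-verified Lean document; each statement's English description precedes it below -/
import Mathlib

section
/- Let q be an odd prime power, let d ≥ 5, let 𝓔 ⊆ F_q^d be a finite set, and let r ∈ F_q. Let C denote the set of tuples (x_1, ..., x_5, y_1, ..., y_5) ∈ P_4(r) such that x_1, ..., x_5 are pairwise distinct and y_1, ..., y_5 are pairwise distinct. Then |C| ≥ |P_4(r)| − 10·|𝓔|·|P_3(r)| − 2·|𝓔|^5·|P_1(r)| − |𝓔|^2·|P_2(r)|. -/
/-- `norm2 x = x₁² + ⋯ + x_d²` for `x ∈ F_q^d`. -/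
def norm2 {F : Type*} [Field F] {d : ℕ} (x : Fin d → F) : F := ∑ i, x i ^ 2

/-- `𝓔` contains a pair of `k`-stars with dilation ratio `r`: there are distinct
`x₁, …, x_{k+1} ∈ 𝓔` and distinct `y₁, …, y_{k+1} ∈ 𝓔` with
`‖y_i − y₁‖ = r‖x_i − x₁‖ ≠ 0` for `i = 2, …, k+1`. -/
def ContainsPairOfStars {F : Type*} [Field F] {d : ℕ}
    (𝓔 : Finset (Fin d → F)) (k : ℕ) (r : F) : Prop :=
  ∃ x y : Fin (k + 1) → (Fin d → F),
    Function.Injective x ∧ Function.Injective y ∧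
    (∀ i, x i ∈ 𝓔) ∧ (∀ i, y i ∈ 𝓔) ∧
    ∀ i : Fin (k + 1), i ≠ 0 →
      norm2 (y i - y 0) = r * norm2 (x i - x 0) ∧ r * norm2 (x i - x 0) ≠ 0

/-- `𝓔` contains a pair of `k`-paths with dilation ratio `r`: there are distinct
`x₁, …, x_{k+1} ∈ 𝓔` and distinct `y₁, …, y_{k+1} ∈ 𝓔` with
`‖y_{i+1} − y_i‖ = r‖x_{i+1} − x_i‖ ≠ 0` for `i = 1, …, k`. -/
def ContainsPairOfPaths {F : Type*} [Field F] {d : ℕ}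
    (𝓔 : Finset (Fin d → F)) (k : ℕ) (r : F) : Prop :=
  ∃ x y : Fin (k + 1) → (Fin d → F),
    Function.Injective x ∧ Function.Injective y ∧
    (∀ i, x i ∈ 𝓔) ∧ (∀ i, y i ∈ 𝓔) ∧
    ∀ i : Fin k,
      norm2 (y i.succ - y i.castSucc) = r * norm2 (x i.succ - x i.castSucc) ∧
      r * norm2 (x i.succ - x i.castSucc) ≠ 0

open scoped Classical

/-- `P_k(r)`: tuples `(x₁, …, x_{k+1}, y₁, …, y_{k+1}) ∈ 𝓔^{2k+2}` with
`‖y_{i+1} − y_i‖ = r‖x_{i+1} − x_i‖ ≠ 0` for all `i = 1, …, k`. -/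

noncomputable def Pset {F : Type*} [Field F] [Fintype F] {d : ℕ}
    (𝓔 : Finset (Fin d → F)) (k : ℕ) (r : F) :
    Finset ((Fin (k + 1) → Fin d → F) × (Fin (k + 1) → Fin d → F)) :=
  Finset.univ.filter fun p =>
    (∀ i, p.1 i ∈ 𝓔) ∧ (∀ i, p.2 i ∈ 𝓔) ∧
    ∀ i : Fin k,
      norm2 (p.2 i.succ - p.2 i.castSucc) = r * norm2 (p.1 i.succ - p.1 i.castSucc) ∧
      r * norm2 (p.1 i.succ - p.1 i.castSucc) ≠ 0


/-!
A tuple of `P_4(r)` is degenerate exactly when two nonconsecutive `x`'s or two nonconsecutive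
`y`'s coincide, and for five points there are six nonconsecutive pairs per side. A collision
involving an endpoint makes that endpoint redundant: the tuple is recovered from the
remaining path in `P_3(r)` and the free partner point in `𝓔`. The one interior collision
`x₂ = x₄` keeps only the edge `x₂x₃` as a path in `P_1(r)`, with five free points. The `y`-side
is reduced to the `x`-side by swapping `x` and `y`, which turns `P_k(r)` into `P_k(r⁻¹)`.
This bounds the degenerate tuples by `10·|𝓔|·|P_3(r)| + 2·|𝓔|⁵·|P_1(r)|`.
-/

open Finset

theorem exists_nonconsecutive_eq_of_not_injective {α : Type*} {f : Fin 5 → α}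
    (hf : ¬Function.Injective f) (h01 : f 0 ≠ f 1) (h12 : f 1 ≠ f 2) (h23 : f 2 ≠ f 3)
    (h34 : f 3 ≠ f 4) :
    f 0 = f 2 ∨ f 0 = f 3 ∨ f 0 = f 4 ∨ f 1 = f 3 ∨ f 1 = f 4 ∨ f 2 = f 4 := by
  obtain ⟨a, b, hab, hne⟩ := Function.not_injective_iff.1 hf
  fin_cases a <;> fin_cases b <;> simp_all [eq_comm]

section Pset

variable {F : Type*} [Field F] [Fintype F] {d : ℕ} {𝓔 : Finset (Fin d → F)} {k : ℕ} {r : F}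
  {p : (Fin (k + 1) → Fin d → F) × (Fin (k + 1) → Fin d → F)}

theorem mem_Pset : p ∈ Pset 𝓔 k r ↔ (∀ i, p.1 i ∈ 𝓔) ∧ (∀ i, p.2 i ∈ 𝓔) ∧
    ∀ i : Fin k,
      norm2 (p.2 i.succ - p.2 i.castSucc) = r * norm2 (p.1 i.succ - p.1 i.castSucc) ∧
      r * norm2 (p.1 i.succ - p.1 i.castSucc) ≠ 0 := by
  simp [Pset]

theorem Pset.fst_castSucc_ne_fst_succ (hp : p ∈ Pset 𝓔 k r) (i : Fin k) :
    p.1 i.castSucc ≠ p.1 i.succ := by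
  intro h
  exact ((mem_Pset.1 hp).2.2 i).2 (by simp [h, norm2])

theorem Pset.swap_mem_inv (hp : p ∈ Pset 𝓔 k r) : p.swap ∈ Pset 𝓔 k r⁻¹ := by
  obtain ⟨hx, hy, hedge⟩ := mem_Pset.1 hp
  refine mem_Pset.2 ⟨hy, hx, fun i => ?_⟩
  obtain ⟨heq, hne⟩ := hedge i
  have hr : r ≠ 0 := left_ne_zero_of_mul hne
  rw [Prod.fst_swap, Prod.snd_swap, heq, inv_mul_cancel_left₀ hr]
  exact ⟨rfl, right_ne_zero_of_mul hne⟩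

theorem Pset.init_mem {p : (Fin (k + 2) → Fin d → F) × (Fin (k + 2) → Fin d → F)}
    (hp : p ∈ Pset 𝓔 (k + 1) r) : (Fin.init p.1, Fin.init p.2) ∈ Pset 𝓔 k r := by
  obtain ⟨hx, hy, hedge⟩ := mem_Pset.1 hp
  refine mem_Pset.2 ⟨fun i => hx _, fun i => hy _, fun i => ?_⟩
  simpa only [Fin.init, Fin.succ_castSucc] using hedge i.castSucc

theorem Pset.tail_mem {p : (Fin (k + 2) → Fin d → F) × (Fin (k + 2) → Fin d → F)}
    (hp : p ∈ Pset 𝓔 (k + 1) r) : (Fin.tail p.1, Fin.tail p.2) ∈ Pset 𝓔 k r := by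
  obtain ⟨hx, hy, hedge⟩ := mem_Pset.1 hp
  refine mem_Pset.2 ⟨fun i => hx _, fun i => hy _, fun i => ?_⟩
  simpa only [Fin.tail, Fin.succ_castSucc] using hedge i.succ

theorem Pset.edge_mem (hp : p ∈ Pset 𝓔 k r) (i : Fin k) :
    (![p.1 i.castSucc, p.1 i.succ], ![p.2 i.castSucc, p.2 i.succ]) ∈ Pset 𝓔 1 r := by
  obtain ⟨hx, hy, hedge⟩ := mem_Pset.1 hp
  refine mem_Pset.2 ⟨fun j => ?_, fun j => ?_, fun j => ?_⟩
  · fin_cases j <;> exact hx _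
  · fin_cases j <;> exact hy _
  · simpa [Fin.fin_one_eq_zero j] using hedge i

theorem card_Pset_le_card_Pset_inv : #(Pset 𝓔 k r) ≤ #(Pset 𝓔 k r⁻¹) :=
  card_le_card_of_injOn Prod.swap (fun _ hp => Pset.swap_mem_inv hp)
    Prod.swap_injective.injOn

theorem card_Pset_inv : #(Pset 𝓔 k r⁻¹) = #(Pset 𝓔 k r) :=
  le_antisymm (by simpa using card_Pset_le_card_Pset_inv (𝓔 := 𝓔) (k := k) (r := r⁻¹))
    card_Pset_le_card_Pset_inv

theorem card_filter_snd_le_card_filter_fst_inv (P : (Fin (k + 1) → Fin d → F) → Prop)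
    [DecidablePred P] :
    #{p ∈ Pset 𝓔 k r | P p.2} ≤ #{p ∈ Pset 𝓔 k r⁻¹ | P p.1} := by
  refine card_le_card_of_injOn Prod.swap (fun p hp => ?_) Prod.swap_injective.injOn
  rw [coe_filter] at hp
  exact mem_filter.2 ⟨Pset.swap_mem_inv hp.1, hp.2⟩

theorem card_filter_fst_castSucc_eq_last_le (a : Fin (k + 1)) :
    #{p ∈ Pset 𝓔 (k + 1) r | p.1 a.castSucc = p.1 (Fin.last (k + 1))} ≤
      #(Pset 𝓔 k r) * #𝓔 := by
  rw [← card_product]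
  refine card_le_card_of_injOn (fun p => ((Fin.init p.1, Fin.init p.2), p.2 (Fin.last _)))
    (fun p hp => ?_) fun p hp q hq hpq => ?_
  · rw [coe_filter] at hp
    exact mem_product.2 ⟨Pset.init_mem hp.1, (mem_Pset.1 hp.1).2.1 _⟩
  · rw [coe_filter] at hp hq
    simp only [Prod.mk.injEq] at hpq
    obtain ⟨⟨hx, hy⟩, hlast⟩ := hpq
    refine Prod.ext (funext (Fin.lastCases ?_ (congrFun hx)))
      (funext (Fin.lastCases hlast (congrFun hy)))
    exact hp.2.symm.trans ((congrFun hx a).trans hq.2)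

theorem card_filter_fst_zero_eq_succ_le (b : Fin (k + 1)) :
    #{p ∈ Pset 𝓔 (k + 1) r | p.1 0 = p.1 b.succ} ≤ #(Pset 𝓔 k r) * #𝓔 := by
  rw [← card_product]
  refine card_le_card_of_injOn (fun p => ((Fin.tail p.1, Fin.tail p.2), p.2 0))
    (fun p hp => ?_) fun p hp q hq hpq => ?_
  · rw [coe_filter] at hp
    exact mem_product.2 ⟨Pset.tail_mem hp.1, (mem_Pset.1 hp.1).2.1 _⟩
  · rw [coe_filter] at hp hq
    simp only [Prod.mk.injEq] at hpq
    obtain ⟨⟨hx, hy⟩, hzero⟩ := hpq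
    refine Prod.ext (funext (Fin.cases ?_ (congrFun hx)))
      (funext (Fin.cases hzero (congrFun hy)))
    exact hp.2.trans ((congrFun hx b).trans hq.2.symm)

theorem card_filter_fst_one_eq_three_le :
    #{p ∈ Pset 𝓔 4 r | p.1 1 = p.1 3} ≤ #(Pset 𝓔 1 r) * #𝓔 ^ 5 := by
  have hcard : #(Pset 𝓔 1 r ×ˢ (𝓔 ×ˢ 𝓔 ×ˢ 𝓔 ×ˢ 𝓔 ×ˢ 𝓔)) = #(Pset 𝓔 1 r) * #𝓔 ^ 5 := by
    simp only [card_product]; ring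
  rw [← hcard]
  refine card_le_card_of_injOn
    (fun p => ((![p.1 1, p.1 2], ![p.2 1, p.2 2]), (p.1 0, p.1 4, p.2 0, p.2 3, p.2 4)))
    (fun p hp => ?_) fun p hp q hq hpq => ?_
  · rw [coe_filter] at hp
    obtain ⟨hx, hy, -⟩ := mem_Pset.1 hp.1
    exact mem_product.2 ⟨Pset.edge_mem hp.1 1, by simp [hx, hy]⟩
  · rw [coe_filter] at hp hq
    simp only [Prod.mk.injEq] at hpq
    obtain ⟨⟨hx, hy⟩, hx0, hx4, hy0, hy3, hy4⟩ := hpq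
    have hx1 := congrFun hx 0
    have hx2 := congrFun hx 1
    have hy1 := congrFun hy 0
    have hy2 := congrFun hy 1
    simp only [Matrix.cons_val_zero, Matrix.cons_val_one] at hx1 hx2 hy1 hy2
    have hx3 : p.1 3 = q.1 3 := hp.2.symm.trans (hx1.trans hq.2)
    refine Prod.ext (funext fun i => ?_) (funext fun i => ?_) <;> fin_cases i <;> assumption

theorem card_filter_not_injective_fst_le :
    #{p ∈ Pset 𝓔 4 r | ¬Function.Injective p.1} ≤
      5 * (#(Pset 𝓔 3 r) * #𝓔) + #(Pset 𝓔 1 r) * #𝓔 ^ 5 := by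
  have hsub : {p ∈ Pset 𝓔 4 r | ¬Function.Injective p.1} ⊆
      {p ∈ Pset 𝓔 4 r | p.1 0 = p.1 (1 : Fin 4).succ} ∪
      ({p ∈ Pset 𝓔 4 r | p.1 0 = p.1 (2 : Fin 4).succ} ∪
      ({p ∈ Pset 𝓔 4 r | p.1 0 = p.1 (3 : Fin 4).succ} ∪
      ({p ∈ Pset 𝓔 4 r | p.1 1 = p.1 3} ∪
      ({p ∈ Pset 𝓔 4 r | p.1 (1 : Fin 4).castSucc = p.1 (Fin.last 4)} ∪
      {p ∈ Pset 𝓔 4 r | p.1 (2 : Fin 4).castSucc = p.1 (Fin.last 4)})))) := by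
    intro p hp
    obtain ⟨hp, hinj⟩ := mem_filter.1 hp
    simp only [mem_union, mem_filter, hp, true_and]
    exact exists_nonconsecutive_eq_of_not_injective hinj
      (Pset.fst_castSucc_ne_fst_succ hp 0) (Pset.fst_castSucc_ne_fst_succ hp 1)
      (Pset.fst_castSucc_ne_fst_succ hp 2) (Pset.fst_castSucc_ne_fst_succ hp 3)
  grw [card_le_card hsub, card_union_le, card_union_le, card_union_le, card_union_le,
    card_union_le, card_filter_fst_zero_eq_succ_le, card_filter_fst_zero_eq_succ_le,
    card_filter_fst_zero_eq_succ_le, card_filter_fst_one_eq_three_le,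
    card_filter_fst_castSucc_eq_last_le, card_filter_fst_castSucc_eq_last_le]
  omega

theorem card_filter_not_injective_snd_le :
    #{p ∈ Pset 𝓔 4 r | ¬Function.Injective p.2} ≤
      5 * (#(Pset 𝓔 3 r) * #𝓔) + #(Pset 𝓔 1 r) * #𝓔 ^ 5 := by
  calc #{p ∈ Pset 𝓔 4 r | ¬Function.Injective p.2}
      _ ≤ #{p ∈ Pset 𝓔 4 r⁻¹ | ¬Function.Injective p.1} :=
        card_filter_snd_le_card_filter_fst_inv (fun x => ¬Function.Injective x)
      _ ≤ 5 * (#(Pset 𝓔 3 r) * #𝓔) + #(Pset 𝓔 1 r) * #𝓔 ^ 5 := by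
        simpa only [card_Pset_inv] using card_filter_not_injective_fst_le (𝓔 := 𝓔) (r := r⁻¹)

end Pset

theorem Pset_nondegenerate_high_dim_general {F : Type*} [Field F] [Fintype F]
    {d : ℕ}
    (𝓔 : Finset (Fin d → F)) (r : F) :
    ((Pset 𝓔 4 r).card : ℤ)
        - 10 * (𝓔.card : ℤ) * ((Pset 𝓔 3 r).card : ℤ)
        - 2 * (𝓔.card : ℤ) ^ 5 * ((Pset 𝓔 1 r).card : ℤ)
        - (𝓔.card : ℤ) ^ 2 * ((Pset 𝓔 2 r).card : ℤ)
      ≤ (((Pset 𝓔 4 r).filter fun p =>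
          Function.Injective p.1 ∧ Function.Injective p.2).card : ℤ) := by
  have hsplit := card_filter_add_card_filter_not (s := Pset 𝓔 4 r)
    (fun p => Function.Injective p.1 ∧ Function.Injective p.2)
  have hdegenerate : #{p ∈ Pset 𝓔 4 r | ¬(Function.Injective p.1 ∧ Function.Injective p.2)} ≤
      10 * (#(Pset 𝓔 3 r) * #𝓔) + 2 * (#(Pset 𝓔 1 r) * #𝓔 ^ 5) := by
    simp only [not_and_or, filter_or]
    grw [card_union_le, card_filter_not_injective_fst_le, card_filter_not_injective_snd_le]
    omega
  have hP2 : (0 : ℤ) ≤ (𝓔.card : ℤ) ^ 2 * ((Pset 𝓔 2 r).card : ℤ) := by positivity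
  zify at hsplit hdegenerate
  linarith

/-- For `d ≥ 5`, if `C` is the set of tuples of `P_4(r)` whose
`x`-parts are pairwise distinct and whose `y`-parts are pairwise distinct, then
`|C| ≥ |P_4(r)| − 10·|𝓔|·|P_3(r)| − 2·|𝓔|⁵·|P_1(r)| − |𝓔|²·|P_2(r)|`. -/
theorem Pset_nondegenerate_high_dim {F : Type*} [Field F] [Fintype F]
    (hodd : Odd (Fintype.card F))
    {d : ℕ} (hd : 5 ≤ d)
    (𝓔 : Finset (Fin d → F)) (r : F) :
    ((Pset 𝓔 4 r).card : ℤ)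
        - 10 * (𝓔.card : ℤ) * ((Pset 𝓔 3 r).card : ℤ)
        - 2 * (𝓔.card : ℤ) ^ 5 * ((Pset 𝓔 1 r).card : ℤ)
        - (𝓔.card : ℤ) ^ 2 * ((Pset 𝓔 2 r).card : ℤ)
      ≤ (((Pset 𝓔 4 r).filter fun p =>
          Function.Injective p.1 ∧ Function.Injective p.2).card : ℤ) :=
  Pset_nondegenerate_high_dim_general 𝓔 r
end

section
/- Let q be an odd prime power, let d satisfy 2 ≤ d ≤ 4, let 𝓔 ⊆ F_q^d be a finite set, and let r ∈ F_q. If |P_1(r)| > 5.03023 · q^((2d−2)/3) · |𝓔|^3 (an inequality of real numbers, with real exponent (2d−2)/3), then 𝓔 contains a pair of 4-paths with dilation ratio r. -/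
open scoped Classical

/-!
Join `(x, y)` and `(x', y')` in `𝓔 × 𝓔` when `‖y' − y‖ = r‖x' − x‖ ≠ 0`. Then `|P₁(r)|` is the
degree sum of this graph, and a pair of `4`-paths is a path on five vertices of it with distinct
first and distinct second coordinates. Since `|P₁(r)| ≤ |𝓔|⁴`, the hypothesis forces
`|𝓔| > 5.03023 q^((2d−2)/3)`; as `5.03023² > 24` and `q^(d−1) ≤ q^((4d−4)/3)`, this gives
`|P₁(r)| > 24 q^(d−1) |𝓔|²`. So the average degree exceeds `24 q^(d−1)`, and some nonempty vertex
set induces minimum degree `> 12 q^(d−1)`. Neighbours of a vertex with a prescribed first (or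
second) coordinate lie on a sphere, which has at most `2 q^(d−1)` points, so a path can be
extended greedily while avoiding three earlier first and three earlier second coordinates.
-/

open Finset

section Norm2

variable {F : Type*} [Field F]

lemma norm2_sub_comm {d : ℕ} (a b : Fin d → F) : norm2 (a - b) = norm2 (b - a) := by
  simp only [norm2, Pi.sub_apply, ← neg_sub (b _), neg_sq]

lemma norm2_sub_self {d : ℕ} (a : Fin d → F) : norm2 (a - a) = 0 := by
  simp [norm2]

variable [Fintype F]

lemma card_filter_sq_sub_eq_le_two (c k : F) : #{a | (a - c) ^ 2 = k} ≤ 2 := by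
  rcases eq_empty_or_nonempty ({a | (a - c) ^ 2 = k} : Finset F) with h | ⟨b, hb⟩
  · simp [h]
  refine (card_le_card fun a ha => ?_).trans (card_le_two (a := b) (b := 2 * c - b))
  rw [mem_filter] at ha hb
  rcases sq_eq_sq_iff_eq_or_eq_neg.1 (ha.2.trans hb.2.symm) with h | h <;>
    simp only [mem_insert, mem_singleton]
  · exact Or.inl (by linear_combination h)
  · exact Or.inr (by linear_combination h)

lemma card_sphere_le {d : ℕ} (c : Fin (d + 1) → F) (s : F) :
    #{y | norm2 (y - c) = s} ≤ 2 * Fintype.card F ^ d := by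
  set S : Finset (Fin (d + 1) → F) := {y | norm2 (y - c) = s}
  have hfiber : ∀ t ∈ S.image Fin.tail, #(S.filter (Fin.tail · = t)) ≤ 2 := by
    intro t _
    refine (card_le_card_of_injOn (· 0) (t := {a | (a - c 0) ^ 2 =
      s - ∑ i, (t i - c i.succ) ^ 2}) (fun y hy => ?_) (fun y hy z hz h => ?_)).trans
      (card_filter_sq_sub_eq_le_two _ _)
    · simp only [S, coe_filter, mem_filter, mem_univ, true_and, Set.mem_ofPred_eq] at hy ⊢
      rw [← hy.1, ← hy.2, norm2, Fin.sum_univ_succ]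
      simp [Fin.tail]
    · simp only [S, coe_filter, mem_filter, mem_univ, true_and, Set.mem_ofPred_eq] at hy hz
      rw [← Fin.cons_self_tail y, ← Fin.cons_self_tail z, hy.2, hz.2, show y 0 = z 0 from h]
  calc #S ≤ 2 * #(S.image Fin.tail) := card_le_mul_card_image S 2 hfiber
    _ ≤ 2 * Fintype.card F ^ d := by
      gcongr
      simpa using card_le_univ (S.image Fin.tail)

end Norm2

namespace SimpleGraph

variable {α : Type*} (G : SimpleGraph α) [DecidableRel G.Adj]

lemma sum_card_filter_adj_insert [DecidableEq α] {s : Finset α} {a : α} (ha : a ∉ s) :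
    ∑ v ∈ insert a s, #((insert a s).filter (G.Adj v)) =
      ∑ v ∈ s, #(s.filter (G.Adj v)) + 2 * #(s.filter (G.Adj a)) := by
  simp only [card_filter, sum_insert ha, G.irrefl, if_false, zero_add, sum_add_distrib,
    G.adj_comm _ a]
  ring

lemma exists_subset_forall_lt_card_filter_adj (D : ℕ) (V : Finset α)
    (hV : 2 * D * #V < ∑ v ∈ V, #(V.filter (G.Adj v))) :
    ∃ W ⊆ V, W.Nonempty ∧ ∀ v ∈ W, D < #(W.filter (G.Adj v)) := by
  classical
  induction V using Finset.strongInduction with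
  | H V ih =>
    by_cases hmin : ∀ v ∈ V, D < #(V.filter (G.Adj v))
    · refine ⟨V, subset_rfl, nonempty_iff_ne_empty.2 ?_, hmin⟩
      rintro rfl
      simp at hV
    push Not at hmin
    obtain ⟨a, ha, hdeg⟩ := hmin
    have hdeg' : #((V.erase a).filter (G.Adj a)) ≤ D :=
      (card_le_card (filter_subset_filter _ (erase_subset a V))).trans hdeg
    rw [← insert_erase ha, sum_card_filter_adj_insert G (notMem_erase a V),
      card_insert_of_notMem (notMem_erase a V)] at hV
    obtain ⟨W, hW, hne, hWdeg⟩ := ih (V.erase a) (erase_ssubset ha) (by nlinarith)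
    exact ⟨W, hW.trans (erase_subset a V), hne, hWdeg⟩

end SimpleGraph

lemma Finset.exists_mem_fst_notMem_snd_notMem {α β : Type*} [DecidableEq α] [DecidableEq β]
    {s : Finset (α × β)}
    {X : Finset α} {Y : Finset β} {M : ℕ} (hfst : ∀ a, #(s.filter (·.1 = a)) ≤ M)
    (hsnd : ∀ b, #(s.filter (·.2 = b)) ≤ M) (hs : (#X + #Y) * M < #s) :
    ∃ p ∈ s, p.1 ∉ X ∧ p.2 ∉ Y := by
  classical
  by_contra! h
  have hcover : s ⊆ X.biUnion (fun a => s.filter (·.1 = a)) ∪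
      Y.biUnion (fun b => s.filter (·.2 = b)) := by
    intro p hp
    by_cases hX : p.1 ∈ X
    · exact mem_union_left _ (mem_biUnion.2 ⟨p.1, hX, mem_filter.2 ⟨hp, rfl⟩⟩)
    · exact mem_union_right _ (mem_biUnion.2 ⟨p.2, h p hp hX, mem_filter.2 ⟨hp, rfl⟩⟩)
  have := (card_le_card hcover).trans (card_union_le _ _)
  have := card_biUnion_le_card_mul X _ M fun a _ => hfst a
  have := card_biUnion_le_card_mul Y _ M fun b _ => hsnd b
  nlinarith

lemma SimpleGraph.exists_path_injective_fst_snd {α β : Type*} (G : SimpleGraph (α × β))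
    (hG : ∀ u w, G.Adj u w → u.1 ≠ w.1 ∧ u.2 ≠ w.2) {W : Finset (α × β)} (hW : W.Nonempty)
    {k : ℕ} (hstep : ∀ v ∈ W, ∀ (X : Finset α) (Y : Finset β), #X ≤ k → #Y ≤ k →
      ∃ w ∈ W, G.Adj w v ∧ w.1 ∉ X ∧ w.2 ∉ Y) :
    ∀ n ≤ k + 1, ∃ x : Fin (n + 1) → α, ∃ y : Fin (n + 1) → β,
      Function.Injective x ∧ Function.Injective y ∧ (∀ i, (x i, y i) ∈ W) ∧
      ∀ i : Fin n, G.Adj (x i.castSucc, y i.castSucc) (x i.succ, y i.succ) := by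
  classical
  intro n hn
  induction n with
  | zero =>
    obtain ⟨v, hv⟩ := hW
    exact ⟨fun _ => v.1, fun _ => v.2, fun i j _ => Subsingleton.elim (α := Fin 1) i j,
      fun i j _ => Subsingleton.elim (α := Fin 1) i j, fun _ => hv, fun i => i.elim0⟩
  | succ n ih =>
    obtain ⟨x, y, hx, hy, hxy, hadj⟩ := ih (by omega)
    -- The new vertex is adjacent to `(x 0, y 0)`, so it only has to avoid the other `n` vertices.
    obtain ⟨w, hw, hwv, hwx, hwy⟩ := hstep _ (hxy 0) (univ.image (x ∘ Fin.succ))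
      (univ.image (y ∘ Fin.succ)) (card_image_le.trans (by simpa using hn))
      (card_image_le.trans (by simpa using hn))
    refine ⟨Fin.cons w.1 x, Fin.cons w.2 y, Fin.cons_injective_iff.2 ⟨?_, hx⟩,
      Fin.cons_injective_iff.2 ⟨?_, hy⟩, Fin.cases hw hxy, Fin.cases hwv fun i => ?_⟩
    · rintro ⟨i, hi⟩
      cases i using Fin.cases with
      | zero => exact (hG _ _ hwv).1 hi.symm
      | succ i => exact hwx (mem_image.2 ⟨i, mem_univ _, hi⟩)
    · rintro ⟨i, hi⟩
      cases i using Fin.cases with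
      | zero => exact (hG _ _ hwv).2 hi.symm
      | succ i => exact hwy (mem_image.2 ⟨i, mem_univ _, hi⟩)
    · simpa [← Fin.succ_castSucc] using hadj i

section DilationGraph

variable {F : Type*} [Field F]

variable (F) in
@[simps]
def dilationGraph (d : ℕ) (r : F) : SimpleGraph ((Fin d → F) × (Fin d → F)) where
  Adj u w := norm2 (w.2 - u.2) = r * norm2 (w.1 - u.1) ∧ r * norm2 (w.1 - u.1) ≠ 0
  symm := ⟨fun u w h => by rwa [norm2_sub_comm u.1, norm2_sub_comm u.2]⟩
  loopless := ⟨fun u h => h.2 (by rw [norm2_sub_self, mul_zero])⟩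

namespace dilationGraph

variable {d : ℕ} {r : F}

lemma fst_ne_and_snd_ne_of_adj {u w : (Fin d → F) × (Fin d → F)}
    (h : (dilationGraph F d r).Adj u w) : u.1 ≠ w.1 ∧ u.2 ≠ w.2 := by
  rw [dilationGraph_adj] at h
  refine ⟨fun h1 => h.2 ?_, fun h2 => h.2 ?_⟩
  · rw [h1, norm2_sub_self, mul_zero]
  · rw [← h.1, h2, norm2_sub_self]

variable [Fintype F]

lemma card_Pset_one (𝓔 : Finset (Fin d → F)) :
    #(Pset 𝓔 1 r) = ∑ v ∈ 𝓔 ×ˢ 𝓔, #((𝓔 ×ˢ 𝓔).filter ((dilationGraph F d r).Adj v)) := by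
  set V := 𝓔 ×ˢ 𝓔
  have hPset : #(Pset 𝓔 1 r) =
      #((V ×ˢ V).filter fun e => (dilationGraph F d r).Adj e.1 e.2) := by
    refine card_nbij' (fun p => ((p.1 0, p.2 0), (p.1 1, p.2 1)))
      (fun e => (![e.1.1, e.2.1], ![e.1.2, e.2.2])) (fun p hp => ?_) (fun e he => ?_)
      (fun p _ => ?_) (fun e _ => rfl)
    · simp_all [V, Pset, Fin.forall_fin_two]
    · simp_all [V, Pset, Fin.forall_fin_two]
    · ext i <;> fin_cases i <;> rfl
  rw [hPset, card_filter, sum_product]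
  simp only [card_filter]

lemma card_Pset_one_le (𝓔 : Finset (Fin d → F)) : #(Pset 𝓔 1 r) ≤ #𝓔 ^ 4 := by
  rw [card_Pset_one]
  calc _ ≤ ∑ _v ∈ 𝓔 ×ˢ 𝓔, #(𝓔 ×ˢ 𝓔) := sum_le_sum fun v _ => card_filter_le _ _
    _ = #𝓔 ^ 4 := by rw [sum_const, card_product, smul_eq_mul]; ring

lemma card_filter_adj_fst_eq_le (S : Finset ((Fin (d + 1) → F) × (Fin (d + 1) → F)))
    (v : (Fin (d + 1) → F) × (Fin (d + 1) → F)) (a : Fin (d + 1) → F) :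
    #((S.filter ((dilationGraph F (d + 1) r).Adj v)).filter (·.1 = a)) ≤
      2 * Fintype.card F ^ d := by
  refine (card_le_card_of_injOn Prod.snd (fun w hw => ?_) (fun w hw w' hw' h => ?_)).trans
    (card_sphere_le v.2 (r * norm2 (a - v.1)))
  · simp only [coe_filter, mem_filter, Set.mem_ofPred_eq, mem_univ, true_and,
      dilationGraph_adj] at hw ⊢
    rw [← hw.2]
    exact hw.1.2.1
  · simp only [coe_filter, mem_filter, Set.mem_ofPred_eq] at hw hw'
    exact Prod.ext (hw.2.trans hw'.2.symm) h

lemma card_filter_adj_snd_eq_le (S : Finset ((Fin (d + 1) → F) × (Fin (d + 1) → F)))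
    (v : (Fin (d + 1) → F) × (Fin (d + 1) → F)) (b : Fin (d + 1) → F) :
    #((S.filter ((dilationGraph F (d + 1) r).Adj v)).filter (·.2 = b)) ≤
      2 * Fintype.card F ^ d := by
  refine (card_le_card_of_injOn Prod.fst (fun w hw => ?_) (fun w hw w' hw' h => ?_)).trans
    (card_sphere_le v.1 (r⁻¹ * norm2 (b - v.2)))
  · simp only [coe_filter, mem_filter, Set.mem_ofPred_eq, mem_univ, true_and,
      dilationGraph_adj] at hw ⊢
    obtain ⟨⟨-, hadj, hne⟩, rfl⟩ := hw
    rw [hadj, inv_mul_cancel_left₀ (left_ne_zero_of_mul hne)]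
  · simp only [coe_filter, mem_filter, Set.mem_ofPred_eq] at hw hw'
    exact Prod.ext h (hw.2.trans hw'.2.symm)

end dilationGraph

open dilationGraph in
theorem containsPairOfPaths_four_of_lt_card_Pset_one [Fintype F] {d : ℕ}
    (𝓔 : Finset (Fin (d + 1) → F)) (r : F)
    (h : 24 * Fintype.card F ^ d * #𝓔 ^ 2 < #(Pset 𝓔 1 r)) : ContainsPairOfPaths 𝓔 4 r := by
  set G := dilationGraph F (d + 1) r
  obtain ⟨W, hWV, hW, hdeg⟩ :=
    G.exists_subset_forall_lt_card_filter_adj (12 * Fintype.card F ^ d) (𝓔 ×ˢ 𝓔)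
      (by rw [← card_Pset_one, card_product]; convert h using 1; ring)
  have hstep : ∀ v ∈ W, ∀ X Y, #X ≤ 3 → #Y ≤ 3 → ∃ w ∈ W, G.Adj w v ∧ w.1 ∉ X ∧ w.2 ∉ Y := by
    intro v hv X Y hX hY
    obtain ⟨w, hw, hwX, hwY⟩ := exists_mem_fst_notMem_snd_notMem
      (card_filter_adj_fst_eq_le W v) (card_filter_adj_snd_eq_le W v)
      ((Nat.mul_le_mul_right _ (add_le_add hX hY)).trans_lt (by linarith [hdeg v hv]))
    obtain ⟨hwW, hvw⟩ := mem_filter.1 hw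
    exact ⟨w, hwW, hvw.symm, hwX, hwY⟩
  obtain ⟨x, y, hx, hy, hxy, hadj⟩ :=
    G.exists_path_injective_fst_snd (fun _ _ => fst_ne_and_snd_ne_of_adj) hW hstep 4 le_rfl
  exact ⟨x, y, hx, hy, fun i => (mem_product.1 (hWV (hxy i))).1,
    fun i => (mem_product.1 (hWV (hxy i))).2, hadj⟩

end DilationGraph

lemma mul_sq_lt_of_mul_cube_lt_of_le_pow_four {Q E P s : ℝ} (hQ : 0 < Q) (hE : 0 ≤ E)
    (hs : s ≤ Q ^ 2) (hP : 5.03023 * Q * E ^ 3 < P) (hPE : P ≤ E ^ 4) : 24 * s * E ^ 2 < P := by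
  have hQE : 5.03023 * Q < E := by
    by_contra! hEQ
    nlinarith [mul_le_mul_of_nonneg_right hEQ (pow_nonneg hE 3)]
  calc 24 * s * E ^ 2 ≤ 24 * (Q * E) ^ 2 := by rw [mul_pow, ← mul_assoc]; gcongr
    _ < 5.03023 ^ 2 * (Q * E) ^ 2 :=
      mul_lt_mul_of_pos_right (by norm_num) (pow_pos (mul_pos hQ (by linarith)) 2)
    _ = 5.03023 * Q * (5.03023 * Q) * E ^ 2 := by ring
    _ ≤ 5.03023 * Q * E * E ^ 2 := by gcongr
    _ = 5.03023 * Q * E ^ 3 := by ring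
    _ < P := hP

theorem paths_of_Pset_one_large_low_dim_general {F : Type*} [Field F] [Fintype F]
    {d : ℕ} (hd2 : 2 ≤ d)
    (𝓔 : Finset (Fin d → F)) (r : F)
    (hP : 5.03023 * (Fintype.card F : ℝ) ^ ((2 * (d : ℝ) - 2) / 3) * (𝓔.card : ℝ) ^ 3
      < ((Pset 𝓔 1 r).card : ℝ)) :
    ContainsPairOfPaths 𝓔 4 r := by
  obtain ⟨n, rfl⟩ : ∃ n, d = n + 1 := ⟨d - 1, by omega⟩
  apply containsPairOfPaths_four_of_lt_card_Pset_one
  set q : ℝ := (Fintype.card F : ℝ)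
  set Q : ℝ := q ^ ((2 * ((n + 1 : ℕ) : ℝ) - 2) / 3)
  have hq : 1 ≤ q := Nat.one_le_cast.2 Fintype.card_pos
  have hqQ : q ^ n ≤ Q ^ 2 := by
    rw [← Real.rpow_natCast, ← Real.rpow_natCast, ← Real.rpow_mul (by positivity)]
    exact Real.rpow_le_rpow_of_exponent_le hq (by push_cast; linarith)
  have hPE : (#(Pset 𝓔 1 r) : ℝ) ≤ (#𝓔 : ℝ) ^ 4 := by
    exact_mod_cast dilationGraph.card_Pset_one_le 𝓔
  have h := mul_sq_lt_of_mul_cube_lt_of_le_pow_four (by positivity) (Nat.cast_nonneg _) hqQ hP hPE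
  simp only [q] at h
  exact_mod_cast h

/-- For `2 ≤ d ≤ 4`, if `|P_1(r)| > 5.03023·q^((2d−2)/3)·|𝓔|³`,
then `𝓔` contains a pair of `4`-paths with dilation ratio `r`. -/
theorem paths_of_Pset_one_large_low_dim {F : Type*} [Field F] [Fintype F]
    (hodd : Odd (Fintype.card F))
    {d : ℕ} (hd2 : 2 ≤ d) (hd4 : d ≤ 4)
    (𝓔 : Finset (Fin d → F)) (r : F)
    (hP : 5.03023 * (Fintype.card F : ℝ) ^ ((2 * (d : ℝ) - 2) / 3) * (𝓔.card : ℝ) ^ 3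
      < ((Pset 𝓔 1 r).card : ℝ)) :
    ContainsPairOfPaths 𝓔 4 r :=
  paths_of_Pset_one_large_low_dim_general hd2 𝓔 r hP
end
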